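/- arXiv:2101.10040 — 2 statements merged into one kernel-verified Lean document; each statement's English description precedes it below -/
import Mathlib

section
/- Let A ∈ ℝ^{2n×n²} be the vertically stacked incidence matrix encoding the row-sum and column-sum constraints of the Birkhoff polytope (first n rows: block row-sums; last n rows: n copies of the identity Iₙ side by side). Then A† = Aᵀ/n − J_{n²,2n}/(2n²) is the Moore–Penrose pseudoinverse of A, where J_{n²,2n} is the all-ones matrix. -/
/-! With `J` the all-ones matrix: `A` has row sums `n` and column sums `2`, so `A J = n J` and
`J A = 2 J`; and `(AᵀA)_{cd} = [c₁ = d₁] + [c₂ = d₂]`, whence `A Aᵀ A = n A + J`. Thus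
`A A† = A Aᵀ / n - J / (2n)` and `A† A = Aᵀ A / n - J / n²` are visibly symmetric, and the
remaining two Penrose identities collapse to identities between multiples of `A`, `Aᵀ` and `J`. -/

open Matrix

/-- The Birkhoff constraint matrix `A ∈ ℝ^{2n×n²}`: rows indexed by
`Sum (Fin n) (Fin n)` (row-sum constraints then column-sum constraints), columns
indexed by `Fin n × Fin n` (matrix entries). -/
def birkhoffA (n : ℕ) : Matrix (Fin n ⊕ Fin n) (Fin n × Fin n) ℝ :=
  fun r c => match r with
  | Sum.inl i => if c.1 = i then 1 else 0
  | Sum.inr j => if c.2 = j then 1 else 0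

/-- The claimed Moore–Penrose pseudoinverse `A† = Aᵀ/n − J/(2n²)`. -/
noncomputable def birkhoffAdagger (n : ℕ) : Matrix (Fin n × Fin n) (Fin n ⊕ Fin n) ℝ :=
  (1 / (n : ℝ)) • (birkhoffA n)ᵀ - (1 / (2 * (n : ℝ) ^ 2)) • (Matrix.of fun (_ : Fin n × Fin n) (_ : Fin n ⊕ Fin n) => (1 : ℝ))

section AllOnes

variable {R : Type*} {l m n : Type*}

local notation "𝟙" => Matrix.of fun _ _ => (1 : R)

theorem transpose_of_one [One R] : (𝟙 : Matrix m n R)ᵀ = 𝟙 := rfl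

theorem of_one_mul_of_one [NonAssocSemiring R] [Fintype m] :
    (𝟙 : Matrix l m R) * (𝟙 : Matrix m n R) = (Fintype.card m : R) • 𝟙 := by
  ext i j
  simp [mul_apply]

end AllOnes

local notation "𝟙" => Matrix.of fun _ _ => (1 : ℝ)

section Birkhoff

variable {m : Type*} (n : ℕ)

theorem sum_birkhoffA_row (r : Fin n ⊕ Fin n) : ∑ c, birkhoffA n r c = n := by
  rcases r with i | j
  · rw [Fintype.sum_prod_type_right]
    simp [birkhoffA]
  · rw [Fintype.sum_prod_type]
    simp [birkhoffA]

theorem sum_birkhoffA_col (c : Fin n × Fin n) : ∑ r, birkhoffA n r c = 2 := by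
  norm_num [birkhoffA, Fintype.sum_sum_type]

theorem birkhoffA_mul_of_one :
    birkhoffA n * (𝟙 : Matrix (Fin n × Fin n) m ℝ) = (n : ℝ) • 𝟙 := by
  ext r k
  simp [mul_apply, sum_birkhoffA_row]

theorem of_one_mul_birkhoffA :
    (𝟙 : Matrix m (Fin n ⊕ Fin n) ℝ) * birkhoffA n = (2 : ℝ) • 𝟙 := by
  ext k c
  simp only [mul_apply, of_apply, one_mul, sum_birkhoffA_col]
  simp

theorem transpose_birkhoffA_mul_self_apply (c d : Fin n × Fin n) :
    ((birkhoffA n)ᵀ * birkhoffA n) c d =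
      (if c.1 = d.1 then 1 else 0) + (if c.2 = d.2 then 1 else 0) := by
  simp [mul_apply, birkhoffA, Fintype.sum_sum_type, eq_comm]

theorem birkhoffA_mul_transpose_mul_self :
    birkhoffA n * (birkhoffA n)ᵀ * birkhoffA n = (n : ℝ) • birkhoffA n + 𝟙 := by
  ext (i | j) c <;>
    simp [Matrix.mul_assoc, mul_apply (M := birkhoffA n), transpose_birkhoffA_mul_self_apply,
      birkhoffA, Fintype.sum_prod_type, Finset.sum_add_distrib, eq_comm, add_comm]

theorem transpose_birkhoffA_mul_of_one :
    (birkhoffA n)ᵀ * (𝟙 : Matrix (Fin n ⊕ Fin n) m ℝ) = (2 : ℝ) • 𝟙 := by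
  rw [← transpose_of_one, ← transpose_mul, of_one_mul_birkhoffA, transpose_smul, transpose_of_one]

theorem of_one_mul_transpose_birkhoffA :
    (𝟙 : Matrix m (Fin n × Fin n) ℝ) * (birkhoffA n)ᵀ = (n : ℝ) • 𝟙 := by
  rw [← transpose_of_one, ← transpose_mul, birkhoffA_mul_of_one, transpose_smul, transpose_of_one]

theorem transpose_birkhoffA_mul_self_mul_transpose :
    (birkhoffA n)ᵀ * birkhoffA n * (birkhoffA n)ᵀ = (n : ℝ) • (birkhoffA n)ᵀ + 𝟙 := by
  simpa [Matrix.mul_assoc, transpose_of_one] using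
    congrArg transpose (birkhoffA_mul_transpose_mul_self n)

end Birkhoff

/-- `A† = Aᵀ/n − J_{n²,2n}/(2n²)` satisfies the four Penrose conditions, hence is
the Moore–Penrose pseudoinverse of the Birkhoff constraint matrix `A`. -/
theorem birkhoff_pseudoinverse (n : ℕ) (hn : 0 < n) :
    birkhoffA n * birkhoffAdagger n * birkhoffA n = birkhoffA n ∧
    birkhoffAdagger n * birkhoffA n * birkhoffAdagger n = birkhoffAdagger n ∧
    (birkhoffA n * birkhoffAdagger n)ᵀ = birkhoffA n * birkhoffAdagger n ∧
    (birkhoffAdagger n * birkhoffA n)ᵀ = birkhoffAdagger n * birkhoffA n := by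
  have hn₀ : (n : ℝ) ≠ 0 := by positivity
  have hAd : birkhoffAdagger n = (1 / n : ℝ) • (birkhoffA n)ᵀ - (1 / (2 * n ^ 2) : ℝ) • 𝟙 := rfl
  have hAAd : birkhoffA n * birkhoffAdagger n =
      (1 / n : ℝ) • (birkhoffA n * (birkhoffA n)ᵀ) - (1 / (2 * n) : ℝ) • 𝟙 := by
    rw [hAd, Matrix.mul_sub, Matrix.mul_smul, Matrix.mul_smul, birkhoffA_mul_of_one, smul_smul]
    match_scalars <;> field_simp
  have hAdA : birkhoffAdagger n * birkhoffA n =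
      (1 / n : ℝ) • ((birkhoffA n)ᵀ * birkhoffA n) - (1 / n ^ 2 : ℝ) • 𝟙 := by
    rw [hAd, Matrix.sub_mul, Matrix.smul_mul, Matrix.smul_mul, of_one_mul_birkhoffA, smul_smul]
    match_scalars <;> field_simp
  refine ⟨?_, ?_, ?_, ?_⟩
  · rw [hAAd, Matrix.sub_mul, Matrix.smul_mul, Matrix.smul_mul, birkhoffA_mul_transpose_mul_self,
      of_one_mul_birkhoffA]
    match_scalars
    · field_simp
    · field_simp
      ring
  · rw [hAdA, hAd]
    simp only [Matrix.sub_mul, Matrix.mul_sub, Matrix.smul_mul, Matrix.mul_smul,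
      transpose_birkhoffA_mul_self_mul_transpose]
    rw [Matrix.mul_assoc (birkhoffA n)ᵀ, birkhoffA_mul_of_one, Matrix.mul_smul,
      transpose_birkhoffA_mul_of_one, of_one_mul_transpose_birkhoffA, of_one_mul_of_one,
      Fintype.card_prod, Fintype.card_fin, Nat.cast_mul]
    match_scalars
    · field_simp
    · field_simp
      ring
  · rw [hAAd, transpose_sub, transpose_smul, transpose_smul, transpose_mul, transpose_transpose,
      transpose_of_one]
  · rw [hAdA, transpose_sub, transpose_smul, transpose_smul, transpose_mul, transpose_transpose,
      transpose_of_one]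
end

section
/- With A ∈ ℝ^{2n×n²} the Birkhoff constraint matrix and A† its Moore–Penrose pseudoinverse, the matrix A†A ∈ ℝ^{n²×n²} equals (1/n²) times the block matrix whose diagonal blocks are B₁ = nIₙ + (n−1)Jₙ and whose off-diagonal blocks are B₂ = nIₙ − Jₙ, where Jₙ is the n×n all-ones matrix. In particular, A†A has only three distinct entries (up to the factor 1/n²): 2n−1, n−1, and −1. -/
open Matrix

/-! `AᵀA = I ⊗ J + J ⊗ I`, and every column of `A` has exactly two ones, so `JA = 2J`.
Hence `A†A = (I ⊗ J + J ⊗ I)/n − J/n²`. -/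

namespace birkhoffA

variable {n : ℕ}

theorem transpose_mul_self_apply (i k j l : Fin n) :
    ((birkhoffA n)ᵀ * birkhoffA n) (i, k) (j, l) =
      (if i = j then 1 else 0) + (if k = l then 1 else 0) := by
  simp [mul_apply, birkhoffA, Fintype.sum_sum_type]

theorem sum_apply_eq_two (c : Fin n × Fin n) : ∑ r, birkhoffA n r c = 2 := by
  norm_num [birkhoffA, Fintype.sum_sum_type]

end birkhoffA

theorem birkhoffAdagger_mul_birkhoffA_apply (n : ℕ) (i k j l : Fin n) :
    (birkhoffAdagger n * birkhoffA n) (i, k) (j, l) =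
      ((if i = j then 1 else 0) + (if k = l then 1 else 0)) / n - 1 / (n : ℝ) ^ 2 := by
  have hJA : ((of fun (_ : Fin n × Fin n) (_ : Fin n ⊕ Fin n) => (1 : ℝ)) * birkhoffA n) (i, k)
      (j, l) = 2 := by
    simpa [mul_apply] using birkhoffA.sum_apply_eq_two (j, l)
  have hn : (n : ℝ) ≠ 0 := Nat.cast_ne_zero.mpr (Fin.pos i).ne'
  rw [birkhoffAdagger, Matrix.sub_mul, Matrix.smul_mul, Matrix.smul_mul, Matrix.sub_apply,
    Matrix.smul_apply, Matrix.smul_apply, hJA, birkhoffA.transpose_mul_self_apply, smul_eq_mul,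
    smul_eq_mul]
  field_simp

theorem birkhoff_AdaggerA_general (n : ℕ) :
    ∀ i k j l : Fin n,
      (birkhoffAdagger n * birkhoffA n) (i, k) (j, l) =
        (1 / (n : ℝ) ^ 2) *
          (if i = j then
            (n : ℝ) * (if k = l then 1 else 0) + ((n : ℝ) - 1)
          else
            (n : ℝ) * (if k = l then 1 else 0) - 1) := by
  intro i k j l
  have hn : (n : ℝ) ≠ 0 := Nat.cast_ne_zero.mpr (Fin.pos i).ne'
  rw [birkhoffAdagger_mul_birkhoffA_apply]
  split_ifs <;> field_simp <;> ring

/-- `A†A` is the `n²×n²` block matrix `(1/n²)` times the matrix with diagonal blocks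
`B₁ = nIₙ + (n−1)Jₙ` and off-diagonal blocks `B₂ = nIₙ − Jₙ`. -/
theorem birkhoff_AdaggerA (n : ℕ) (hn : 0 < n) :
    ∀ i k j l : Fin n,
      (birkhoffAdagger n * birkhoffA n) (i, k) (j, l) =
        (1 / (n : ℝ) ^ 2) *
          (if i = j then
            (n : ℝ) * (if k = l then 1 else 0) + ((n : ℝ) - 1)
          else
            (n : ℝ) * (if k = l then 1 else 0) - 1) :=
  birkhoff_AdaggerA_general n
end
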